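/- arXiv:2303.12560 — 2 statements merged into one kernel-verified Lean document; each statement's English description precedes it below -/
import Mathlib

section
/- A graph H on [n] has a nonempty cubic (3-regular on its support) subgraph if and only if there exists some vertex i such that the minimum over spanning subgraphs G ⊆ H of ∑_j f_j(d_j(G)) is 0, where f_i(x) = (x-3)^2 and f_j(x) = x(x-3)^2 for j ≠ i. -/
/-!
Every term of the sum is nonnegative, so the minimum is `0` exactly when some spanning
subgraph makes every term vanish. The term of vertex `j ≠ i` vanishes iff `d_j ∈ {0, 3}`,
and the term of `i` iff `d_i = 3`; the latter forces an edge at `i`. Conversely, any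
vertex on an edge of a nonempty cubic subgraph can serve as `i`.
-/

/-- The degree of vertex `i` in `G`. -/
noncomputable def deg {n : ℕ} (G : SimpleGraph (Fin n)) (i : Fin n) : ℕ := (G.neighborSet i).ncard

namespace CubicSubgraph

variable {α : Type*} [DecidableEq α]

def penalty (i j : α) (d : ℕ) : ℤ :=
  if j = i then ((d : ℤ) - 3) ^ 2 else (d : ℤ) * ((d : ℤ) - 3) ^ 2

lemma penalty_nonneg (i j : α) (d : ℕ) : 0 ≤ penalty i j d := by
  unfold penalty
  split_ifs <;> positivity

lemma penalty_eq_zero_iff (i j : α) (d : ℕ) :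
    penalty i j d = 0 ↔ d = 3 ∨ (j ≠ i ∧ d = 0) := by
  unfold penalty
  split_ifs with hj
  · simp only [pow_eq_zero_iff two_ne_zero, sub_eq_zero, hj]
    norm_cast
    simp
  · simp only [mul_eq_zero, pow_eq_zero_iff two_ne_zero, sub_eq_zero]
    norm_cast
    tauto

lemma sum_penalty_eq_zero_iff [Fintype α] (i : α) (d : α → ℕ) :
    ∑ j, penalty i j (d j) = 0 ↔ d i = 3 ∧ ∀ j, d j = 0 ∨ d j = 3 := by
  rw [Finset.sum_eq_zero_iff_of_nonneg fun j _ => penalty_nonneg i j (d j)]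
  simp only [Finset.mem_univ, true_implies, penalty_eq_zero_iff]
  constructor
  · intro h
    exact ⟨(h i).resolve_right (by simp), fun j => (h j).elim Or.inr (Or.inl ∘ And.right)⟩
  · rintro ⟨hi, hd⟩ j
    by_cases hj : j = i
    · exact Or.inl (hj ▸ hi)
    · exact (hd j).elim (fun h => Or.inr ⟨hj, h⟩) Or.inl

variable {n : ℕ}

lemma deg_ne_zero_iff (G : SimpleGraph (Fin n)) (a : Fin n) :
    deg G a ≠ 0 ↔ ∃ b, G.Adj a b := by
  rw [deg, Ne, Set.ncard_eq_zero (Set.toFinite _), ← Ne, ← Set.nonempty_iff_ne_empty]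
  rfl

lemma edgeSet_nonempty_iff_exists_deg_ne_zero (G : SimpleGraph (Fin n)) :
    G.edgeSet.Nonempty ↔ ∃ a, deg G a ≠ 0 := by
  simp only [deg_ne_zero_iff, SimpleGraph.edgeSet_nonempty, SimpleGraph.ne_bot_iff_exists_adj]

lemma isLeast_sum_penalty_zero_iff (H : SimpleGraph (Fin n)) (i : Fin n) :
    IsLeast {s : ℤ | ∃ G ≤ H, s = ∑ j, penalty i j (deg G j)} 0 ↔
      ∃ G ≤ H, deg G i = 3 ∧ ∀ j, deg G j = 0 ∨ deg G j = 3 := by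
  constructor
  · rintro ⟨⟨G, hGH, hG⟩, -⟩
    exact ⟨G, hGH, (sum_penalty_eq_zero_iff i (deg G)).mp hG.symm⟩
  · rintro ⟨G, hGH, hG⟩
    refine ⟨⟨G, hGH, ((sum_penalty_eq_zero_iff i (deg G)).mpr hG).symm⟩, ?_⟩
    rintro s ⟨G', -, rfl⟩
    exact Finset.sum_nonneg fun j _ => penalty_nonneg i j (deg G' j)

end CubicSubgraph

open CubicSubgraph in
/-- A graph `H` on `[n]` has a nonempty cubic subgraph (a subgraph with at least one edge
in which every vertex of positive degree has degree `3`) iff for some vertex `i` the minimum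
over spanning subgraphs `G ⊆ H` of `∑ j, f j (d_j(G))` is `0`, where `f i x = (x-3)²` and
`f j x = x(x-3)²` for `j ≠ i`. -/
theorem cubic_subgraph_iff_min_zero (n : ℕ) (H : SimpleGraph (Fin n)) :
    (∃ G ≤ H, G.edgeSet.Nonempty ∧ ∀ j, deg G j = 0 ∨ deg G j = 3) ↔
      ∃ i : Fin n,
        IsLeast {s : ℤ | ∃ G ≤ H, s = ∑ j : Fin n,
          if j = i then ((deg G j : ℤ) - 3) ^ 2
          else (deg G j : ℤ) * ((deg G j : ℤ) - 3) ^ 2} 0 := by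
  constructor
  · rintro ⟨G, hGH, hE, hdeg⟩
    obtain ⟨i, hi⟩ := (edgeSet_nonempty_iff_exists_deg_ne_zero G).mp hE
    exact ⟨i, (isLeast_sum_penalty_zero_iff H i).mpr ⟨G, hGH, (hdeg i).resolve_left hi, hdeg⟩⟩
  · rintro ⟨i, hi⟩
    obtain ⟨G, hGH, hi3, hdeg⟩ := (isLeast_sum_penalty_zero_iff H i).mp hi
    refine ⟨G, hGH, (edgeSet_nonempty_iff_exists_deg_ne_zero G).mpr ⟨i, ?_⟩, hdeg⟩
    omega
end

section
/- Let v be a forget node with child u, I_u = I_v ⊎ {i}. Then g(v, c_v, F_v) = min{ g(u, c_u, F_u) : F_u ⊆ E(H[I_u]), F_u ∩ E(H[I_v]) = F_v, c_u restricted to I_v equals c_v }, where the min is over all choices of F_u and of c_u(i) ∈ {0,...,n-1}. -/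
/-- The edges of `G` both of whose endpoints lie in `S` (the edge set of `G[S]`). -/
def edgesIn {n : ℕ} (G : SimpleGraph (Fin n)) (S : Set (Fin n)) : Set (Sym2 (Fin n)) :=
  {e | e ∈ G.edgeSet ∧ ∀ i ∈ e, i ∈ S}

/-- `G` is a subgraph of the induced subgraph `H[S]` (viewed as a graph on all of `[n]`):
`G ≤ H` and all edges of `G` lie inside `S`. -/
def SubgraphOn {n : ℕ} (H G : SimpleGraph (Fin n)) (S : Set (Fin n)) : Prop :=
  G ≤ H ∧ ∀ ⦃a b : Fin n⦄, G.Adj a b → a ∈ S ∧ b ∈ S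

/-- A (rooted) tree decomposition of a graph `H` on `[n]`: a finite tree `T` with a root,
bags `bag v ⊆ [n]` covering all vertices, every edge of `H` contained in some bag, and for
every vertex `i` the nodes whose bag contains `i` forming a connected (path-closed) set. -/
structure TreeDecomp (n : ℕ) (H : SimpleGraph (Fin n)) where
  τ : Type
  [finτ : Fintype τ]
  tree : SimpleGraph τ
  isTree : tree.IsTree
  root : τ
  bag : τ → Set (Fin n)
  bag_cover : ∀ i : Fin n, ∃ v, i ∈ bag v
  bag_edge : ∀ ⦃i j : Fin n⦄, H.Adj i j → ∃ v, i ∈ bag v ∧ j ∈ bag v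
  bag_conn : ∀ (i : Fin n) (x y : τ) (p : tree.Walk x y), p.IsPath →
    i ∈ bag x → i ∈ bag y → ∀ v ∈ p.support, i ∈ bag v

namespace TreeDecomp

variable {n : ℕ} {H : SimpleGraph (Fin n)} (td : TreeDecomp n H)

/-- `u` lies in the subtree rooted at `v`: every walk from the root to `u` passes `v`. -/
def desc (v u : td.τ) : Prop := ∀ p : td.tree.Walk td.root u, v ∈ p.support

/-- `u` is a child of `v` in the rooted tree. -/
def child (v u : td.τ) : Prop := td.tree.Adj v u ∧ td.desc v u

/-- `I(T_v)`: the union of all bags over the subtree rooted at `v`. -/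
def bags (v : td.τ) : Set (Fin n) := {i | ∃ u, td.desc v u ∧ i ∈ td.bag u}

end TreeDecomp

/-- `g(v, c, F)`: the minimum of `∑_{i ∈ I(T_v)} f i (d_i(G))` over subgraphs
`G ⊆ H[I(T_v)]` with `E(G[I_v]) = F` and `d_i(G) = c i` for all `i ∈ I_v`,
with the convention that the minimum over the empty set is `∞`. -/
noncomputable def gval {n : ℕ} {H : SimpleGraph (Fin n)} (td : TreeDecomp n H)
    (f : Fin n → ℕ → ℤ) (v : td.τ) (c : Fin n → ℕ) (F : Set (Sym2 (Fin n))) :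
    WithTop ℤ :=
  sInf {x : WithTop ℤ | ∃ G : SimpleGraph (Fin n), SubgraphOn H G (td.bags v) ∧
    edgesIn G (td.bag v) = F ∧ (∀ i ∈ td.bag v, deg G i = c i) ∧
    x = ((∑ i ∈ (Set.toFinite (td.bags v)).toFinset, f i (deg G i) : ℤ) : WithTop ℤ)}

/-!
Since `u` is the only child of `v` and `I_v ⊆ I_u`, the subtree below `v` adds no vertex:
`I(T_v) = I(T_u)`, so `g(v, ·, ·)` and `g(u, ·, ·)` range over the same graphs `G ⊆ H[I(T_u)]`.
A graph feasible for `(v, c, F)` is feasible for `u` with `F_u = E(G[I_u])` and `c_u = d(G)`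
(and `d_i(G) < n` automatically), while `F` is recovered from `F_u` as `F_u ∩ E(H[I_v])`.
So the candidate values at `v` are the union of those at `u` over the admissible `(F_u, c_u)`,
and the infimum of a union is the infimum of the infima, the sets being bounded below because
there are only finitely many graphs on `[n]`.
-/

-- Stated in `WithTop` because there `sInf ∅ = ⊤`, so empty `B k` contribute nothing.
theorem WithTop.sInf_eq_sInf_image_sInf {β ι : Type*} [ConditionallyCompleteLattice β]
    {A : Set (WithTop β)} {B : ι → Set (WithTop β)} {K : Set ι}
    (hA : A = ⋃ k ∈ K, B k) (hbdd : BddBelow A) :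
    sInf A = sInf ((fun k => sInf (B k)) '' K) := by
  have hBA : ∀ k ∈ K, B k ⊆ A := fun k hk => hA ▸ Set.subset_biUnion_of_mem hk
  have hle : ∀ k ∈ K, sInf A ≤ sInf (B k) := fun k hk =>
    (WithTop.isGLB_sInf' (hbdd.mono (hBA k hk))).2 fun x hx =>
      (WithTop.isGLB_sInf' hbdd).1 (hBA k hk hx)
  have hbddR : BddBelow ((fun k => sInf (B k)) '' K) := ⟨sInf A, Set.forall_mem_image.2 hle⟩
  refine le_antisymm ((WithTop.isGLB_sInf' hbddR).2 (Set.forall_mem_image.2 hle)) ?_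
  refine (WithTop.isGLB_sInf' hbdd).2 fun x hx => ?_
  obtain ⟨k, hk, hxk⟩ : ∃ k ∈ K, x ∈ B k := by simpa [hA] using hx
  exact ((WithTop.isGLB_sInf' hbddR).1 ⟨k, hk, rfl⟩).trans
    ((WithTop.isGLB_sInf' (hbdd.mono (hBA k hk))).1 hxk)

lemma deg_lt {n : ℕ} (G : SimpleGraph (Fin n)) (j : Fin n) : deg G j < n := by
  classical
  calc deg G j = G.degree j := by
        rw [deg, ← Nat.card_coe_set_eq, Nat.card_eq_fintype_card, G.card_neighborSet_eq_degree]
    _ < n := by simpa using G.degree_lt_card_verts j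

lemma edgesIn_mono_left {n : ℕ} {G H : SimpleGraph (Fin n)} (hGH : G ≤ H) (S : Set (Fin n)) :
    edgesIn G S ⊆ edgesIn H S :=
  fun _ ⟨he, hS⟩ => ⟨SimpleGraph.edgeSet_mono hGH he, hS⟩

lemma edgesIn_inter_edgesIn {n : ℕ} {G H : SimpleGraph (Fin n)} (hGH : G ≤ H)
    {S T : Set (Fin n)} (hST : S ⊆ T) :
    edgesIn G T ∩ edgesIn H S = edgesIn G S := by
  ext e
  constructor
  · rintro ⟨⟨he, -⟩, -, hS⟩
    exact ⟨he, hS⟩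
  · rintro ⟨he, hS⟩
    exact ⟨⟨he, fun j hj => hST (hS j hj)⟩, SimpleGraph.edgeSet_mono hGH he, hS⟩

namespace TreeDecomp

variable {n : ℕ} {H : SimpleGraph (Fin n)} (td : TreeDecomp n H)

lemma desc_refl (v : td.τ) : td.desc v v := fun p => p.end_mem_support

variable {td}

lemma desc_trans {a b c : td.τ} (hab : td.desc a b) (hbc : td.desc b c) : td.desc a c := by
  classical
  intro p
  exact p.support_takeUntil_subset_support (hbc p) (hab _)

lemma desc_of_mem_support {x w : td.τ} {p : td.tree.Walk td.root w} (hp : p.IsPath)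
    (hx : x ∈ p.support) : td.desc x w := by
  classical
  intro q
  have : q.bypass = p := congrArg Subtype.val
    ((td.isTree.isAcyclic.subsingleton_path _ _).elim ⟨q.bypass, q.bypass_isPath⟩ ⟨p, hp⟩)
  exact q.support_bypass_subset_support (this ▸ hx)

/-- The first step from `v` towards a proper descendant `w` goes to a child of `v`. -/
lemma exists_child_desc {v w : td.τ} (h : td.desc v w) (hw : w ≠ v) :
    ∃ x, td.child v x ∧ td.desc x w := by
  classical
  obtain ⟨p, hp, -⟩ := td.isTree.existsUnique_path td.root w
  have hv : v ∈ p.support := h p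
  obtain ⟨x, hvx, q, hq⟩ := (p.dropUntil v hv).exists_eq_cons_of_ne (Ne.symm hw)
  have hvq : v ∉ q.support := by
    have := (hp.dropUntil hv).support_nodup
    rw [hq, SimpleGraph.Walk.support_cons] at this
    exact (List.nodup_cons.mp this).1
  have hxp : x ∈ p.support := p.support_dropUntil_subset_support hv (by simp [hq])
  refine ⟨x, ⟨hvx, fun r => ?_⟩, desc_of_mem_support hp hxp⟩
  exact ((r.mem_support_append_iff q).mp (h _)).resolve_right hvq

lemma bags_eq_of_forget {v u : td.τ} (hu : td.child v u) (honly : ∀ x, td.child v x → x = u)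
    (hsub : td.bag v ⊆ td.bag u) : td.bags v = td.bags u := by
  ext j
  constructor
  · rintro ⟨w, hw, hj⟩
    by_cases hwv : w = v
    · subst hwv
      exact ⟨u, td.desc_refl u, hsub hj⟩
    · obtain ⟨x, hx, hxw⟩ := exists_child_desc hw hwv
      exact ⟨w, honly x hx ▸ hxw, hj⟩
  · rintro ⟨w, hw, hj⟩
    exact ⟨w, desc_trans hu.2 hw, hj⟩

end TreeDecomp

def gvalCandidates {n : ℕ} {H : SimpleGraph (Fin n)} (td : TreeDecomp n H)
    (f : Fin n → ℕ → ℤ) (v : td.τ) (c : Fin n → ℕ) (F : Set (Sym2 (Fin n))) :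
    Set (WithTop ℤ) :=
  {x : WithTop ℤ | ∃ G : SimpleGraph (Fin n), SubgraphOn H G (td.bags v) ∧
    edgesIn G (td.bag v) = F ∧ (∀ i ∈ td.bag v, deg G i = c i) ∧
    x = ((∑ i ∈ (Set.toFinite (td.bags v)).toFinset, f i (deg G i) : ℤ) : WithTop ℤ)}

section gval

variable {n : ℕ} {H : SimpleGraph (Fin n)} (td : TreeDecomp n H) (f : Fin n → ℕ → ℤ)

lemma gval_eq_sInf_gvalCandidates (v : td.τ) (c : Fin n → ℕ) (F : Set (Sym2 (Fin n))) :
    gval td f v c F = sInf (gvalCandidates td f v c F) := rfl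

lemma bddBelow_gvalCandidates (v : td.τ) (c : Fin n → ℕ) (F : Set (Sym2 (Fin n))) :
    BddBelow (gvalCandidates td f v c F) :=
  (Set.finite_range fun G : SimpleGraph (Fin n) =>
    ((∑ i ∈ (Set.toFinite (td.bags v)).toFinset, f i (deg G i) : ℤ) : WithTop ℤ)).bddBelow.mono
    (by rintro x ⟨G, -, -, -, rfl⟩; exact ⟨G, rfl⟩)

lemma gvalCandidates_forget {v u : td.τ} (hu : td.child v u)
    (honly : ∀ x, td.child v x → x = u) (i : Fin n) (hsub : td.bag v ⊆ td.bag u)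
    (c : Fin n → ℕ) (F : Set (Sym2 (Fin n))) :
    gvalCandidates td f v c F =
      ⋃ k ∈ {k : Set (Sym2 (Fin n)) × (Fin n → ℕ) | k.1 ⊆ edgesIn H (td.bag u) ∧
        k.1 ∩ edgesIn H (td.bag v) = F ∧ (∀ j ∈ td.bag v, k.2 j = c j) ∧ k.2 i < n},
        gvalCandidates td f u k.2 k.1 := by
  ext x
  simp only [gvalCandidates, td.bags_eq_of_forget hu honly hsub, Set.mem_iUnion,
    Set.mem_ofPred_eq, exists_prop, Prod.exists]
  constructor
  · rintro ⟨G, hG, rfl, hdeg, rfl⟩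
    refine ⟨edgesIn G (td.bag u), deg G, ⟨(edgesIn_mono_left hG.1 _),
      edgesIn_inter_edgesIn hG.1 hsub, hdeg, deg_lt G i⟩, G, hG, rfl, fun _ _ => rfl, rfl⟩
  · rintro ⟨Fu, cu, ⟨-, rfl, hcu, -⟩, G, hG, rfl, hdeg, rfl⟩
    exact ⟨G, hG, (edgesIn_inter_edgesIn hG.1 hsub).symm,
      fun j hj => (hdeg j (hsub hj)).trans (hcu j hj), rfl⟩

end gval

theorem gval_forget_general {n : ℕ} {H : SimpleGraph (Fin n)} (td : TreeDecomp n H)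
    (f : Fin n → ℕ → ℤ) (v u : td.τ) (hu : td.child v u)
    (honly : ∀ x, td.child v x → x = u)
    (i : Fin n) (hbag : td.bag u = insert i (td.bag v))
    (c : Fin n → ℕ) (F : Set (Sym2 (Fin n))) :
    gval td f v c F =
      sInf {y : WithTop ℤ | ∃ (Fu : Set (Sym2 (Fin n))) (cu : Fin n → ℕ),
        Fu ⊆ edgesIn H (td.bag u) ∧ Fu ∩ edgesIn H (td.bag v) = F ∧
        (∀ j ∈ td.bag v, cu j = c j) ∧ cu i < n ∧
        y = gval td f u cu Fu} := by
  have hsub : td.bag v ⊆ td.bag u := hbag ▸ Set.subset_insert i _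
  rw [gval_eq_sInf_gvalCandidates, WithTop.sInf_eq_sInf_image_sInf
    (gvalCandidates_forget td f hu honly i hsub c F) (bddBelow_gvalCandidates td f v c F)]
  congr 1
  ext y
  simp only [Set.mem_image, Set.mem_ofPred_eq, Prod.exists, gval_eq_sInf_gvalCandidates]
  constructor
  · rintro ⟨Fu, cu, ⟨h₁, h₂, h₃, h₄⟩, rfl⟩
    exact ⟨Fu, cu, h₁, h₂, h₃, h₄, rfl⟩
  · rintro ⟨Fu, cu, h₁, h₂, h₃, h₄, rfl⟩
    exact ⟨Fu, cu, ⟨h₁, h₂, h₃, h₄⟩, rfl⟩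

/-- Recursion at a forget node `v` with single child `u`, `I_u = I_v ⊎ {i}`:
`g(v, c, F)` is the minimum of `g(u, c_u, F_u)` over all `F_u ⊆ E(H[I_u])` with
`F_u ∩ E(H[I_v]) = F` and all `c_u` agreeing with `c` on `I_v` with
`c_u i ∈ {0,…,n-1}`. -/
theorem gval_forget {n : ℕ} {H : SimpleGraph (Fin n)} (td : TreeDecomp n H)
    (f : Fin n → ℕ → ℤ) (v u : td.τ) (hu : td.child v u)
    (honly : ∀ x, td.child v x → x = u)
    (i : Fin n) (hi : i ∉ td.bag v) (hbag : td.bag u = insert i (td.bag v))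
    (c : Fin n → ℕ) (F : Set (Sym2 (Fin n))) :
    gval td f v c F =
      sInf {y : WithTop ℤ | ∃ (Fu : Set (Sym2 (Fin n))) (cu : Fin n → ℕ),
        Fu ⊆ edgesIn H (td.bag u) ∧ Fu ∩ edgesIn H (td.bag v) = F ∧
        (∀ j ∈ td.bag v, cu j = c j) ∧ cu i < n ∧
        y = gval td f u cu Fu} :=
  gval_forget_general td f v u hu honly i hbag c F
end
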